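/- arXiv:0803.0153 — 2 statements merged into one kernel-verified Lean document; each statement's English description precedes it below -/
import Mathlib

section
/- Let 0 < μ < λ, let n ≥ 2 and 1 ≤ k ≤ n−1 be integers, and let t > 0. Then the integral over s from 0 to t of s · f_{A_{n,t}^k}(s), where f_{A_{n,t}^k}(s) := k·C(n−1,k)·(λ−μ)^{k+1}·(e^{−(λ−μ)s} − e^{−(λ−μ)t})^{k−1}·e^{−(λ−μ)s}·(λ − μ e^{−(λ−μ)t})^{n−k}·(1 − e^{−(λ−μ)s})^{n−k−1} / ((λ − μ e^{−(λ−μ)s})^n · (1 − e^{−(λ−μ)t})^{n−1}), equals t − Σ_{i=0}^{k−1} Σ_{j=0}^{i} C(n−1,i) C(i,j) (−1)^{i+j} ((λ − μ e^{−(λ−μ)t})/(1 − e^{−(λ−μ)t}))^{n−j−1} · [ g(j) + Σ_{l=1}^{n−j−1} Σ_{m=0}^{l−1} C(n−j−1,l) C(l−1,m) (−1)^{l+m} (λ^{l−1−m} / ((λ−μ) μ^l)) h(j,m) ], where g(j) := (1/((λ−μ) λ^{n−j−1})) [ ln((λ e^{(λ−μ)t} − μ)/(λ−μ)) − Σ_{m=1}^{n−j−2}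 C(n−j−2,m) (μ^m/m) ((λ e^{(λ−μ)t} − μ)^{−m} − (λ−μ)^{−m}) ] and h(j,m) := ln((λ − μ e^{−(λ−μ)t})/(λ−μ)) if m+j+1−n = −1, and h(j,m) := ((λ − μ e^{−(λ−μ)t})^{m+j+2−n} − (λ−μ)^{m+j+2−n})/(m+j+2−n) otherwise. -/
/-!
With `F s = (1 - e^{-(λ-μ)s}) / (λ - μ e^{-(λ-μ)s})`, the density of the `k`-th speciation
time is the derivative of `R (F s / F t)`, where `R` is the CDF of an order statistic of `n - 1`
uniform variables. Integrating by parts turns the expectation into `t - ∫₀ᵗ R (F s / F t) ds`;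
expanding `R` binomially leaves the integrals `∫₀ᵗ F ^ N`, which are computed from an explicit
primitive made of powers and logarithms.
-/

open Real MeasureTheory

/-- The function `g(j)` from Theorem ThmExpt of the paper. -/
noncomputable def gAux (la mu t : ℝ) (n j : ℕ) : ℝ :=
  1 / ((la - mu) * la ^ (n - j - 1)) *
    (Real.log ((la * exp ((la - mu) * t) - mu) / (la - mu)) -
      ∑ m ∈ Finset.Icc 1 (n - j - 2),
        (n - j - 2).choose m * (mu ^ m / m) *
          ((la * exp ((la - mu) * t) - mu) ^ (-(m : ℤ)) - (la - mu) ^ (-(m : ℤ))))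

/-- The function `h(j,m)` from Theorem ThmExpt of the paper. -/
noncomputable def hAux (la mu t : ℝ) (n j m : ℕ) : ℝ :=
  if (m : ℤ) + j + 1 - n = -1 then
    Real.log ((la - mu * exp (-(la - mu) * t)) / (la - mu))
  else
    ((la - mu * exp (-(la - mu) * t)) ^ ((m : ℤ) + j + 2 - n) -
        (la - mu) ^ ((m : ℤ) + j + 2 - n)) / (((m : ℤ) + j + 2 - n : ℤ) : ℝ)

open Finset

noncomputable def zpowPrimitive (e : ℤ) (w : ℝ) : ℝ := if e = 0 then log w else w ^ e / e

theorem hasDerivAt_zpowPrimitive (e : ℤ) {w : ℝ} (hw : w ≠ 0) :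
    HasDerivAt (zpowPrimitive e) (w ^ (e - 1)) w := by
  rcases eq_or_ne e 0 with rfl | he
  · have : zpowPrimitive 0 = log := funext fun v => if_pos rfl
    simpa [this] using hasDerivAt_log hw
  · have : zpowPrimitive e = fun v : ℝ => v ^ e / (e : ℝ) := funext fun v => if_neg he
    rw [this]
    refine ((hasDerivAt_zpow e w (Or.inl hw)).div_const (e : ℝ)).congr_deriv ?_
    field_simp

theorem zpowPrimitive_sub_zpowPrimitive (e : ℤ) {u v : ℝ} (hu : 0 < u) (hv : 0 < v) :
    zpowPrimitive e u - zpowPrimitive e v =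
      if e = 0 then log (u / v) else (u ^ e - v ^ e) / e := by
  unfold zpowPrimitive
  split_ifs
  · exact (log_div hu.ne' hv.ne').symm
  · ring

theorem hasDerivAt_sum_choose_mul_zpowPrimitive_add (a b : ℝ) (L : ℕ) (c : ℤ) {w : ℝ}
    (hw : w ≠ 0) :
    HasDerivAt (fun w => ∑ m ∈ range (L + 1),
        (L.choose m : ℝ) * a ^ m * b ^ (L - m) * zpowPrimitive (c + m) w)
      ((a * w + b) ^ L * w ^ (c - 1)) w := by
  refine (HasDerivAt.fun_sum (u := range (L + 1)) fun m _ =>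
    (hasDerivAt_zpowPrimitive (c + m) hw).const_mul
      ((L.choose m : ℝ) * a ^ m * b ^ (L - m))).congr_deriv ?_
  rw [add_pow, sum_mul]
  refine sum_congr rfl fun m _ => ?_
  rw [show c + m - 1 = m + (c - 1) by ring, zpow_add₀ hw, zpow_natCast]
  ring

theorem hasDerivAt_sum_choose_mul_zpowPrimitive_sub (a : ℝ) (L : ℕ) (c : ℤ) {w : ℝ}
    (hw : w ≠ 0) :
    HasDerivAt (fun w => ∑ m ∈ range (L + 1),
        (L.choose m : ℝ) * a ^ m * zpowPrimitive (c - m) w)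
      ((a + w) ^ L * w ^ (c - L - 1)) w := by
  refine (HasDerivAt.fun_sum (u := range (L + 1)) fun m _ =>
    (hasDerivAt_zpowPrimitive (c - m) hw).const_mul ((L.choose m : ℝ) * a ^ m)).congr_deriv ?_
  rw [add_pow, sum_mul]
  refine sum_congr rfl fun m hm => ?_
  have hmL : m ≤ L := Nat.lt_succ_iff.mp (mem_range.mp hm)
  rw [show c - m - 1 = (L - m : ℕ) + (c - L - 1) by push_cast [hmL]; ring, zpow_add₀ hw,
    zpow_natCast]
  ring

theorem sum_choose_mul_zpowPrimitive_neg_sub (a : ℝ) (L : ℕ) {u v : ℝ} (hu : 0 < u)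
    (hv : 0 < v) :
    ∑ m ∈ range (L + 1), (L.choose m : ℝ) * a ^ m *
        (zpowPrimitive (-m) u - zpowPrimitive (-m) v) =
      log (u / v) - ∑ m ∈ Icc 1 L,
        (L.choose m : ℝ) * (a ^ m / m) * (u ^ (-(m : ℤ)) - v ^ (-(m : ℤ))) := by
  rw [range_eq_Ico, sum_eq_sum_Ico_succ_bot (Nat.succ_pos L), sub_eq_add_neg (log _),
    ← sum_neg_distrib]
  congr 1
  · simp [zpowPrimitive_sub_zpowPrimitive _ hu hv]
  · refine sum_congr rfl fun m hm => ?_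
    have hm0 : (-(m : ℤ)) ≠ 0 := by simp at hm; omega
    rw [zpowPrimitive_sub_zpowPrimitive _ hu hv, if_neg hm0]
    push_cast
    ring

/-- The CDF of the `(N + 1 - k)`-th smallest of `N` i.i.d. uniform variables on `[0, 1]`:
the probability that fewer than `k` of them exceed `y`. -/
def orderStatCDF (N k : ℕ) (y : ℝ) : ℝ :=
  ∑ i ∈ range k, (N.choose i : ℝ) * (1 - y) ^ i * y ^ (N - i)

theorem orderStatCDF_one (N : ℕ) {k : ℕ} (hk : 1 ≤ k) : orderStatCDF N k 1 = 1 := by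
  rw [orderStatCDF, sum_eq_single_of_mem 0 (mem_range.mpr hk) fun i _ hi => by simp [hi]]
  simp

theorem hasDerivAt_orderStatCDF_succ {N k : ℕ} (hk : k < N) (y : ℝ) :
    HasDerivAt (orderStatCDF N (k + 1))
      ((k + 1) * N.choose (k + 1) * (1 - y) ^ k * y ^ (N - (k + 1))) y := by
  induction k with
  | zero =>
    have h1 : orderStatCDF N 1 = fun y => y ^ N := funext fun y => by simp [orderStatCDF]
    simpa [h1] using hasDerivAt_pow N y
  | succ k ih =>
    have hterm : HasDerivAt
        (fun y => (N.choose (k + 1) : ℝ) * ((1 - y) ^ (k + 1) * y ^ (N - (k + 1))))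
        (N.choose (k + 1) * ((k + 1 : ℕ) * (1 - y) ^ k * (-1) * y ^ (N - (k + 1)) +
          (1 - y) ^ (k + 1) * ((N - (k + 1) : ℕ) * y ^ (N - (k + 1) - 1)))) y := by
      have h := (((hasDerivAt_id y).const_sub 1).fun_pow (k + 1)).mul
        (hasDerivAt_pow (N - (k + 1)) y)
      simpa using h.const_mul (N.choose (k + 1) : ℝ)
    have hsucc : orderStatCDF N (k + 1 + 1) = fun y =>
        orderStatCDF N (k + 1) y + N.choose (k + 1) * ((1 - y) ^ (k + 1) * y ^ (N - (k + 1))) := by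
      funext y; simp only [orderStatCDF, sum_range_succ _ (k + 1)]; ring
    rw [hsucc]
    refine ((ih (by omega)).add hterm).congr_deriv ?_
    -- the sum telescopes because `(k + 2) C(N, k + 2) = (N - (k + 1)) C(N, k + 1)`
    have hchoose : (N.choose (k + 1 + 1) : ℝ) * (k + 1 + 1 : ℕ) =
        N.choose (k + 1) * (N - (k + 1) : ℕ) := by
      exact_mod_cast Nat.choose_succ_right_eq N (k + 1)
    rw [show N - (k + 1) - 1 = N - (k + 1 + 1) by omega]
    push_cast at hchoose ⊢
    linear_combination (-(1 - y) ^ (k + 1) * y ^ (N - (k + 1 + 1))) * hchoose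

theorem hasDerivAt_orderStatCDF {N k : ℕ} (hk : k ≤ N) (y : ℝ) :
    HasDerivAt (orderStatCDF N k) (k * N.choose k * (1 - y) ^ (k - 1) * y ^ (N - k)) y := by
  rcases k with _ | k
  · have h0 : orderStatCDF N 0 = fun _ => 0 := funext fun y => by simp [orderStatCDF]
    simpa [h0] using hasDerivAt_const y (0 : ℝ)
  · simpa using hasDerivAt_orderStatCDF_succ hk y

theorem orderStatCDF_eq_sum_sum {N k : ℕ} (hk : k ≤ N) (y : ℝ) :
    orderStatCDF N k y = ∑ i ∈ range k, ∑ j ∈ range (i + 1),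
      (N.choose i : ℝ) * i.choose j * (-1) ^ (i + j) * y ^ (N - j) := by
  refine sum_congr rfl fun i hi => ?_
  have hiN : i ≤ N := by have := mem_range.mp hi; omega
  rw [sub_eq_add_neg, add_pow, mul_sum, sum_mul]
  refine sum_congr rfl fun j hj => ?_
  have hji : j ≤ i := Nat.lt_succ_iff.mp (mem_range.mp hj)
  rw [show N - j = (N - i) + (i - j) by omega, show i + j = (i - j) + 2 * j by omega, neg_pow y]
  simp only [pow_add, pow_mul]
  ring

section BirthDeath

variable {la mu : ℝ}

/-- For a birth-death tree of age `t` with birth rate `la` and death rate `mu`,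
`speciationCDF la mu s / speciationCDF la mu t` is the CDF of a single speciation time. -/
noncomputable def speciationCDF (la mu s : ℝ) : ℝ :=
  (1 - exp (-(la - mu) * s)) / (la - mu * exp (-(la - mu) * s))

theorem sub_mul_exp_pos (hmu : 0 ≤ mu) (hml : mu < la) {s : ℝ} (hs : 0 ≤ s) :
    0 < la - mu * exp (-(la - mu) * s) := by
  have : exp (-(la - mu) * s) ≤ 1 := exp_le_one_iff.mpr (by nlinarith)
  nlinarith

theorem hasDerivAt_exp_neg_mul (la mu s : ℝ) :
    HasDerivAt (fun s => exp (-(la - mu) * s)) (-(la - mu) * exp (-(la - mu) * s)) s := by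
  simpa [mul_comm] using ((hasDerivAt_id s).const_mul (-(la - mu))).exp

theorem hasDerivAt_speciationCDF {s : ℝ} (hD : la - mu * exp (-(la - mu) * s) ≠ 0) :
    HasDerivAt (speciationCDF la mu)
      ((la - mu) ^ 2 * exp (-(la - mu) * s) / (la - mu * exp (-(la - mu) * s)) ^ 2) s := by
  have hE := hasDerivAt_exp_neg_mul la mu s
  refine ((hE.const_sub 1).div ((hE.const_mul mu).const_sub la) hD).congr_deriv ?_
  ring

theorem hasDerivAt_sum_zpowPrimitive_la_mul_exp_sub (M : ℕ) {s : ℝ}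
    (hD : la - mu * exp (-(la - mu) * s) ≠ 0) :
    HasDerivAt (fun s => ∑ m ∈ range (M + 1),
        (M.choose m : ℝ) * mu ^ m * zpowPrimitive (-m) (la * exp ((la - mu) * s) - mu))
      ((la - mu) * la ^ (M + 1) / (la - mu * exp (-(la - mu) * s)) ^ (M + 1)) s := by
  have hX : HasDerivAt (fun s => la * exp ((la - mu) * s) - mu)
      (la * (exp ((la - mu) * s) * (la - mu))) s := by
    simpa using ((((hasDerivAt_id s).const_mul (la - mu)).exp).const_mul la).sub_const mu
  have hEX : exp (-(la - mu) * s) * exp ((la - mu) * s) = 1 := by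
    rw [← exp_add, neg_mul, neg_add_cancel, exp_zero]
  set X := exp ((la - mu) * s)
  set E := exp (-(la - mu) * s)
  have hDW : la - mu * E = E * (la * X - mu) := by linear_combination (-la) * hEX
  have hW : la * X - mu ≠ 0 := by rintro h; exact hD (by rw [hDW, h, mul_zero])
  have h := (hasDerivAt_sum_choose_mul_zpowPrimitive_sub mu M 0 hW).comp s hX
  simp only [zero_sub] at h
  refine h.congr_deriv ?_
  rw [hDW, mul_pow, show -(M : ℤ) - 1 = -((M + 1 : ℕ) : ℤ) by push_cast; ring, zpow_neg,
    zpow_natCast]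
  have hpow : (E * X) ^ (M + 1) = 1 := by rw [hEX, one_pow]
  have hE : E ≠ 0 := (exp_pos _).ne'
  rw [add_sub_cancel]
  field_simp
  linear_combination (la - mu) * la ^ (M + 1) * hpow

theorem hasDerivAt_sum_zpowPrimitive_sub_mul_exp (L : ℕ) (c : ℤ) {s : ℝ}
    (hD : la - mu * exp (-(la - mu) * s) ≠ 0) :
    HasDerivAt (fun s => ∑ m ∈ range (L + 1), (L.choose m : ℝ) * (-1) ^ m * la ^ (L - m) *
        zpowPrimitive (c + m) (la - mu * exp (-(la - mu) * s)))
      ((la - mu) * (mu * exp (-(la - mu) * s)) ^ (L + 1) *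
        (la - mu * exp (-(la - mu) * s)) ^ (c - 1)) s := by
  have h := (hasDerivAt_sum_choose_mul_zpowPrimitive_add (-1) la L c hD).comp s
    (((hasDerivAt_exp_neg_mul la mu s).const_mul mu).const_sub la)
  refine h.congr_deriv ?_
  ring

/-- A primitive of `speciationCDF la mu ^ N`. With `E = e^{-(la-mu)s}` and `D = la - mu E`, expand
`(1 - E)^N`; the term `1 / D^N` is integrated by the substitution `w = la e^{(la-mu)s} - mu`, the
terms `E^l / D^N` by `w = D`, each after a binomial expansion in `w`. -/
noncomputable def speciationCDFPowPrimitive (la mu : ℝ) (N : ℕ) (s : ℝ) : ℝ :=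
  (∑ m ∈ range N, ((N - 1).choose m : ℝ) * mu ^ m *
      zpowPrimitive (-m) (la * exp ((la - mu) * s) - mu)) / ((la - mu) * la ^ N) +
    ∑ l ∈ Icc 1 N, (N.choose l : ℝ) * (-1) ^ l / ((la - mu) * mu ^ l) *
      ∑ m ∈ range l, ((l - 1).choose m : ℝ) * (-1) ^ m * la ^ (l - 1 - m) *
        zpowPrimitive ((1 - N : ℤ) + m) (la - mu * exp (-(la - mu) * s))

theorem hasDerivAt_speciationCDFPowPrimitive (hmu : mu ≠ 0) (hr : la - mu ≠ 0) (hla : la ≠ 0)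
    {N : ℕ} (hN : 1 ≤ N) {s : ℝ} (hD : la - mu * exp (-(la - mu) * s) ≠ 0) :
    HasDerivAt (speciationCDFPowPrimitive la mu N) (speciationCDF la mu s ^ N) s := by
  obtain ⟨M, rfl⟩ : ∃ M, N = M + 1 := ⟨N - 1, by omega⟩
  have hone := (hasDerivAt_sum_zpowPrimitive_la_mul_exp_sub (la := la) (mu := mu) M hD).div_const
    ((la - mu) * la ^ (M + 1))
  have hpowers : HasDerivAt (fun s => ∑ l ∈ Icc 1 (M + 1),
      ((M + 1).choose l : ℝ) * (-1) ^ l / ((la - mu) * mu ^ l) *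
      ∑ m ∈ range l, ((l - 1).choose m : ℝ) * (-1) ^ m * la ^ (l - 1 - m) *
        zpowPrimitive ((1 - (M + 1 : ℕ) : ℤ) + m) (la - mu * exp (-(la - mu) * s)))
      (∑ l ∈ Icc 1 (M + 1), ((M + 1).choose l : ℝ) * (-exp (-(la - mu) * s)) ^ l /
        (la - mu * exp (-(la - mu) * s)) ^ (M + 1)) s := by
    refine HasDerivAt.fun_sum fun l hl => ?_
    obtain ⟨L, rfl⟩ : ∃ L, l = L + 1 := ⟨l - 1, by simp at hl; omega⟩
    refine ((hasDerivAt_sum_zpowPrimitive_sub_mul_exp L _ hD).const_mul _).congr_deriv ?_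
    rw [show ((1 - (M + 1 : ℕ) : ℤ) - 1) = -((M + 1 : ℕ) : ℤ) by push_cast; ring, zpow_neg,
      zpow_natCast]
    generalize exp (-(la - mu) * s) = E at hD ⊢
    field_simp
    ring
  refine (hone.add hpowers).congr_deriv ?_
  rw [speciationCDF, div_pow, sub_eq_neg_add (1 : ℝ), add_pow, range_eq_Ico,
    sum_eq_sum_Ico_succ_bot (Nat.succ_pos _), add_div, sum_div]
  congr 1
  · rw [div_div_cancel_left' (mul_ne_zero hr (pow_ne_zero _ hla))]
    simp
  · exact sum_congr (by ext; simp) fun l _ => by ring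

/-- The density `f_{A^k_{n,t}}` of the `k`-th speciation time. -/
noncomputable def speciationTimeDensity (la mu : ℝ) (n k : ℕ) (t s : ℝ) : ℝ :=
  k * (n - 1).choose k * (la - mu) ^ (k + 1) *
    (exp (-(la - mu) * s) - exp (-(la - mu) * t)) ^ (k - 1) *
    exp (-(la - mu) * s) * (la - mu * exp (-(la - mu) * t)) ^ (n - k) *
    (1 - exp (-(la - mu) * s)) ^ (n - k - 1) /
    ((la - mu * exp (-(la - mu) * s)) ^ n * (1 - exp (-(la - mu) * t)) ^ (n - 1))

theorem hasDerivAt_orderStatCDF_speciationCDF_div (hmu : 0 ≤ mu) (hml : mu < la) {n k : ℕ}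
    (hk1 : 1 ≤ k) (hk2 : k ≤ n - 1) {t s : ℝ} (ht : 0 < t) (hs : 0 ≤ s) :
    HasDerivAt (fun s => orderStatCDF (n - 1) k (speciationCDF la mu s / speciationCDF la mu t))
      (speciationTimeDensity la mu n k t s) s := by
  have hDs := (sub_mul_exp_pos hmu hml hs).ne'
  have hDt := (sub_mul_exp_pos hmu hml ht.le).ne'
  have hB : 1 - exp (-(la - mu) * t) ≠ 0 := (sub_pos.mpr (exp_lt_one_iff.mpr (by nlinarith))).ne'
  refine ((hasDerivAt_orderStatCDF hk2 _).comp s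
    ((hasDerivAt_speciationCDF hDs).div_const _)).congr_deriv ?_
  obtain ⟨m, hm⟩ : ∃ m, n - 1 - k = m := ⟨_, rfl⟩
  obtain ⟨k', hk'⟩ : ∃ k', k - 1 = k' := ⟨_, rfl⟩
  simp only [speciationCDF, speciationTimeDensity]
  rw [hm, show n - k - 1 = m by omega, show n - k = m + 1 by omega, hk',
    show k + 1 = k' + 2 by omega, show n - 1 = k' + m + 1 by omega, show n = k' + m + 2 by omega]
  generalize exp (-(la - mu) * s) = E at hDs ⊢
  generalize exp (-(la - mu) * t) = B at hDt hB ⊢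
  rw [show 1 - (1 - E) / (la - mu * E) / ((1 - B) / (la - mu * B)) =
    (la - mu) * (E - B) / ((la - mu * E) * (1 - B)) by
      rw [div_div_div_eq, one_sub_div (mul_ne_zero hDs hB)]; ring,
    div_div_div_eq]
  simp only [div_pow, mul_pow]
  field_simp
  ring

theorem integral_speciationCDF_pow (hmu : 0 < mu) (hml : mu < la) {N : ℕ} (hN : 1 ≤ N) {t : ℝ}
    (ht : 0 ≤ t) :
    ∫ s in (0 : ℝ)..t, speciationCDF la mu s ^ N =
      speciationCDFPowPrimitive la mu N t - speciationCDFPowPrimitive la mu N 0 := by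
  have hD : ∀ s ∈ Set.uIcc 0 t, la - mu * exp (-(la - mu) * s) ≠ 0 := fun s hs =>
    (sub_mul_exp_pos hmu.le hml (Set.uIcc_of_le ht ▸ hs).1).ne'
  refine intervalIntegral.integral_eq_sub_of_hasDerivAt (fun s hs =>
    hasDerivAt_speciationCDFPowPrimitive hmu.ne' (sub_pos.mpr hml).ne' (hmu.trans hml).ne' hN
      (hD s hs)) ?_
  exact ContinuousOn.intervalIntegrable fun s hs =>
    ((hasDerivAt_speciationCDF (hD s hs)).continuousAt.pow N).continuousWithinAt

theorem speciationCDFPowPrimitive_sub (hmu : 0 ≤ mu) (hml : mu < la) {t : ℝ} (ht : 0 ≤ t)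
    {n j : ℕ} (hj : j + 2 ≤ n) :
    speciationCDFPowPrimitive la mu (n - j - 1) t - speciationCDFPowPrimitive la mu (n - j - 1) 0 =
      gAux la mu t n j + ∑ l ∈ Icc 1 (n - j - 1), ∑ m ∈ range l,
        ((n - j - 1).choose l : ℝ) * ((l - 1).choose m : ℝ) * (-1 : ℝ) ^ (l + m) *
          (la ^ (l - 1 - m) / ((la - mu) * mu ^ l)) * hAux la mu t n j m := by
  have hr : 0 < la - mu := by linarith
  have hDt := sub_mul_exp_pos hmu hml ht
  have hWt : 0 < la * exp ((la - mu) * t) - mu := by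
    have : 1 ≤ exp ((la - mu) * t) := one_le_exp (by positivity)
    nlinarith
  obtain ⟨M, hM⟩ : ∃ M, n - j - 2 = M := ⟨_, rfl⟩
  simp only [speciationCDFPowPrimitive, gAux, show n - j - 1 = M + 1 by omega, hM, mul_zero,
    exp_zero, mul_one, Nat.add_sub_cancel]
  rw [add_sub_add_comm, ← sub_div, ← sum_sub_distrib, ← sum_sub_distrib]
  congr 1
  · simp only [← mul_sub, sum_choose_mul_zpowPrimitive_neg_sub mu M hWt hr]
    ring
  · refine sum_congr rfl fun l _ => ?_
    rw [← mul_sub, ← sum_sub_distrib, mul_sum]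
    refine sum_congr rfl fun m _ => ?_
    have he : (1 - ((M + 1 : ℕ) : ℤ)) + m = (m : ℤ) + j + 2 - n := by omega
    have hcond : (m : ℤ) + j + 1 - n = -1 ↔ (m : ℤ) + j + 2 - n = 0 := by omega
    rw [← mul_sub, zpowPrimitive_sub_zpowPrimitive _ hDt hr, he, hAux, pow_add]
    simp only [hcond]
    ring

theorem continuousOn_speciationTimeDensity (hmu : 0 ≤ mu) (hml : mu < la) (n k : ℕ) {t : ℝ}
    (ht : 0 < t) : ContinuousOn (speciationTimeDensity la mu n k t) (Set.Ici 0) := by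
  have hB : 1 - exp (-(la - mu) * t) ≠ 0 := (sub_pos.mpr (exp_lt_one_iff.mpr (by nlinarith))).ne'
  refine ContinuousOn.div (by fun_prop) (by fun_prop) fun s hs => ?_
  exact mul_ne_zero (pow_ne_zero _ (sub_mul_exp_pos hmu hml hs).ne') (pow_ne_zero _ hB)

end BirthDeath

theorem integral_orderStatCDF_div {N k : ℕ} (hk : k ≤ N) {f : ℝ → ℝ} {a b : ℝ}
    (hf : ContinuousOn f (Set.uIcc a b)) (c : ℝ) :
    ∫ s in a..b, orderStatCDF N k (f s / c) = ∑ i ∈ range k, ∑ j ∈ range (i + 1),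
      (N.choose i : ℝ) * i.choose j * (-1) ^ (i + j) * c⁻¹ ^ (N - j) *
        ∫ s in a..b, f s ^ (N - j) := by
  simp_rw [orderStatCDF_eq_sum_sum hk, div_eq_mul_inv, mul_pow]
  rw [intervalIntegral.integral_finsetSum fun i _ =>
    (by fun_prop : ContinuousOn _ _).intervalIntegrable]
  refine sum_congr rfl fun i _ => ?_
  rw [intervalIntegral.integral_finsetSum fun j _ =>
    (by fun_prop : ContinuousOn _ _).intervalIntegrable]
  refine sum_congr rfl fun j _ => ?_
  rw [← intervalIntegral.integral_const_mul]
  exact intervalIntegral.integral_congr fun s _ => by ring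

theorem stmt_10_general (la mu : ℝ) (hmu : 0 < mu) (hml : mu < la) (n k : ℕ)
    (hk1 : 1 ≤ k) (hk2 : k ≤ n - 1) (t : ℝ) (ht : 0 < t) :
    ∫ s in (0:ℝ)..t,
      s * (k * (n - 1).choose k * (la - mu) ^ (k + 1) *
        (exp (-(la - mu) * s) - exp (-(la - mu) * t)) ^ (k - 1) *
        exp (-(la - mu) * s) * (la - mu * exp (-(la - mu) * t)) ^ (n - k) *
        (1 - exp (-(la - mu) * s)) ^ (n - k - 1) /
        ((la - mu * exp (-(la - mu) * s)) ^ n * (1 - exp (-(la - mu) * t)) ^ (n - 1)))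
      = t - ∑ i ∈ Finset.range k, ∑ j ∈ Finset.range (i + 1),
          (n - 1).choose i * i.choose j * (-1 : ℝ) ^ (i + j) *
            ((la - mu * exp (-(la - mu) * t)) / (1 - exp (-(la - mu) * t))) ^ (n - j - 1) *
            (gAux la mu t n j +
              ∑ l ∈ Finset.Icc 1 (n - j - 1), ∑ m ∈ Finset.range l,
                (n - j - 1).choose l * (l - 1).choose m * (-1 : ℝ) ^ (l + m) *
                  (la ^ (l - 1 - m) / ((la - mu) * mu ^ l)) * hAux la mu t n j m) := by
  have hIcc : Set.uIcc 0 t ⊆ Set.Ici 0 := fun s hs => (Set.uIcc_of_le ht.le ▸ hs).1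
  have hFt : speciationCDF la mu t ≠ 0 :=
    div_ne_zero (sub_pos.mpr (exp_lt_one_iff.mpr (by nlinarith))).ne'
      (sub_mul_exp_pos hmu.le hml ht.le).ne'
  change ∫ s in (0:ℝ)..t, s * speciationTimeDensity la mu n k t s = _
  rw [intervalIntegral.integral_mul_deriv_eq_deriv_mul (fun s _ => hasDerivAt_id' s)
    (fun s hs => hasDerivAt_orderStatCDF_speciationCDF_div hmu.le hml hk1 hk2 ht (hIcc hs))
    intervalIntegrable_const
    ((continuousOn_speciationTimeDensity hmu.le hml n k ht).mono hIcc).intervalIntegrable]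
  simp only [one_mul, zero_mul, sub_zero, div_self hFt, orderStatCDF_one _ hk1, mul_one]
  rw [integral_orderStatCDF_div hk2 (fun s hs => (hasDerivAt_speciationCDF
    (sub_mul_exp_pos hmu.le hml (hIcc hs)).ne').continuousAt.continuousWithinAt)]
  refine congrArg (t - ·) (sum_congr rfl fun i hi => sum_congr rfl fun j hj => ?_)
  have hjn : j + 2 ≤ n := by simp at hi hj; omega
  rw [Nat.sub_right_comm, integral_speciationCDF_pow hmu hml (by omega) ht.le,
    speciationCDFPowPrimitive_sub hmu.le hml ht.le hjn, speciationCDF, inv_div]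

theorem stmt_10 (la mu : ℝ) (hmu : 0 < mu) (hml : mu < la) (n k : ℕ)
    (hn : 2 ≤ n) (hk1 : 1 ≤ k) (hk2 : k ≤ n - 1) (t : ℝ) (ht : 0 < t) :
    ∫ s in (0:ℝ)..t,
      s * (k * (n - 1).choose k * (la - mu) ^ (k + 1) *
        (exp (-(la - mu) * s) - exp (-(la - mu) * t)) ^ (k - 1) *
        exp (-(la - mu) * s) * (la - mu * exp (-(la - mu) * t)) ^ (n - k) *
        (1 - exp (-(la - mu) * s)) ^ (n - k - 1) /
        ((la - mu * exp (-(la - mu) * s)) ^ n * (1 - exp (-(la - mu) * t)) ^ (n - 1)))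
      = t - ∑ i ∈ Finset.range k, ∑ j ∈ Finset.range (i + 1),
          (n - 1).choose i * i.choose j * (-1 : ℝ) ^ (i + j) *
            ((la - mu * exp (-(la - mu) * t)) / (1 - exp (-(la - mu) * t))) ^ (n - j - 1) *
            (gAux la mu t n j +
              ∑ l ∈ Finset.Icc 1 (n - j - 1), ∑ m ∈ Finset.range l,
                (n - j - 1).choose l * (l - 1).choose m * (-1 : ℝ) ^ (l + m) *
                  (la ^ (l - 1 - m) / ((la - mu) * mu ^ l)) * hAux la mu t n j m) :=
  stmt_10_general la mu hmu hml n k hk1 hk2 t ht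
end

section
/- Let 0 < μ < λ, let n ≥ 2 be an integer, and let x₁ > x₂ > … > x_{n−1} > 0 be reals. Then the integral over t from x₁ to ∞ of [ (n−1)! · Π_{i=1}^{n−1} ( (λ−μ)^2 e^{−(λ−μ)x_i}/(λ − μ e^{−(λ−μ)x_i})^2 · (λ − μ e^{−(λ−μ)t})/(1 − e^{−(λ−μ)t}) ) ] · [ n λ^n (λ−μ)^2 (1−e^{−(λ−μ)t})^{n−1} e^{−(λ−μ)t}/(λ − μ e^{−(λ−μ)t})^{n+1} ] equals n! · λ^{n−1} · (λ−μ) · ( e^{−(λ−μ)x₁}/(λ − μ e^{−(λ−μ)x₁}) ) · Π_{i=1}^{n−1} ( (λ−μ)^2 e^{−(λ−μ)x_i}/(λ − μ e^{−(λ−μ)x_i})^2 ). -/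
/-!
Write `r = λ - μ` and `E = e^{-rt}`. The factor `(λ - μE)/(1 - E)` shared by the `n - 1` conditional
densities cancels against `(1 - E)^{n-1}/(λ - μE)^{n+1}` in the tree-age density, so the integrand is
a constant times `E/(λ - μE)^2`, whose antiderivative is `-E/(rλ(λ - μE))`, vanishing at infinity.
The lower limit `x₁` is positive because it dominates `x_{n-1} > 0`, so `λ - μE` and `1 - E` do not
vanish on the domain of integration.
-/

open Real MeasureTheory Set Filter Topology

lemma integral_Ioi_exp_neg_mul_div_sq {la mu r a : ℝ} (hr : 0 < r) (hla : la ≠ 0)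
    (hden : ∀ t ∈ Ici a, la - mu * exp (-r * t) ≠ 0) :
    ∫ t in Ioi a, exp (-r * t) / (la - mu * exp (-r * t)) ^ 2
      = exp (-r * a) / (r * la * (la - mu * exp (-r * a))) := by
  set g : ℝ → ℝ := fun t => -(r * la)⁻¹ * (exp (-r * t) / (la - mu * exp (-r * t)))
  have hderiv : ∀ t ∈ Ici a, HasDerivAt g (exp (-r * t) / (la - mu * exp (-r * t)) ^ 2) t := by
    intro t ht
    have hE := ((hasDerivAt_id' t).const_mul (-r)).exp
    refine ((hE.div ((hE.const_mul mu).const_sub la) (hden t ht)).const_mul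
      (-(r * la)⁻¹)).congr_deriv ?_
    have hD := hden t ht
    field_simp
    ring
  have hexp : Tendsto (fun t => exp (-r * t)) atTop (𝓝 0) :=
    tendsto_exp_atBot.comp (tendsto_id.const_mul_atTop_of_neg (neg_neg_of_pos hr))
  have hlim : Tendsto g atTop (𝓝 0) := by
    have h := (hexp.div ((hexp.const_mul mu).const_sub la) (by simpa using hla)).const_mul
      (-(r * la)⁻¹)
    rwa [mul_zero, zero_div, mul_zero] at h
  rw [integral_Ioi_of_hasDerivAt_of_nonneg' hderiv (fun t _ => by positivity) hlim]
  have hDa := hden a self_mem_Ici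
  simp only [g]
  field_simp
  ring

lemma exp_neg_mul_lt_one {r t : ℝ} (hr : 0 < r) (ht : 0 < t) : exp (-r * t) < 1 :=
  exp_lt_one_iff.mpr (by nlinarith)

lemma sub_mul_exp_neg_mul_pos {la mu r t : ℝ} (hmu : 0 ≤ mu) (hml : mu < la) (hr : 0 ≤ r)
    (ht : 0 ≤ t) : 0 < la - mu * exp (-r * t) := by
  have : exp (-r * t) ≤ 1 := exp_le_one_iff.mpr (by nlinarith)
  nlinarith

lemma mul_prod_mul_div_pow_cancel {ι : Type*} {s : Finset ι} {k : ℕ} (hs : s.card = k)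
    (p : ι → ℝ) {c A D E : ℝ} (hE : 1 - E ≠ 0) (hD : D ≠ 0) :
    (c * ∏ i ∈ s, p i * (D / (1 - E))) * (A * (1 - E) ^ k * E / D ^ (k + 1 + 1))
      = c * (∏ i ∈ s, p i) * A * (E / D ^ 2) := by
  rw [← Finset.prod_mul_pow_card, hs, div_pow]
  field_simp
  ring

theorem stmt_19 (la mu : ℝ) (hmu : 0 < mu) (hml : mu < la) (n : ℕ) (hn : 2 ≤ n)
    (x : ℕ → ℝ) (hpos : 0 < x (n - 1))
    (hsort : ∀ i, 1 ≤ i → i ≤ n - 2 → x (i + 1) < x i) :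
    ∫ t in Set.Ioi (x 1),
      ((n - 1).factorial *
          ∏ i ∈ Finset.Icc 1 (n - 1),
            (la - mu) ^ 2 * exp (-(la - mu) * x i) / (la - mu * exp (-(la - mu) * x i)) ^ 2 *
              ((la - mu * exp (-(la - mu) * t)) / (1 - exp (-(la - mu) * t)))) *
        (n * la ^ n * (la - mu) ^ 2 * (1 - exp (-(la - mu) * t)) ^ (n - 1) *
          exp (-(la - mu) * t) / (la - mu * exp (-(la - mu) * t)) ^ (n + 1))
      = n.factorial * la ^ (n - 1) * (la - mu) *
          (exp (-(la - mu) * x 1) / (la - mu * exp (-(la - mu) * x 1))) *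
          ∏ i ∈ Finset.Icc 1 (n - 1),
            (la - mu) ^ 2 * exp (-(la - mu) * x i) / (la - mu * exp (-(la - mu) * x i)) ^ 2 := by
  have hr : 0 < la - mu := sub_pos.mpr hml
  have hla : la ≠ 0 := (hmu.trans hml).ne'
  have hx : AntitoneOn x (Icc 1 (n - 1)) :=
    antitoneOn_of_add_one_le ordConnected_Icc fun i _ hi hi' =>
      (hsort i hi.1 (by have := hi'.2; omega)).le
  have hx1 : 0 < x 1 :=
    hpos.trans_le (hx ⟨le_rfl, by omega⟩ ⟨by omega, le_rfl⟩ (by omega))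
  have hden : ∀ t, 0 ≤ t → la - mu * exp (-(la - mu) * t) ≠ 0 := fun t ht =>
    (sub_mul_exp_neg_mul_pos hmu.le hml hr.le ht).ne'
  obtain ⟨m, rfl⟩ : ∃ m, n = m + 1 := ⟨n - 1, by omega⟩
  simp only [Nat.add_sub_cancel]
  set P := ∏ i ∈ Finset.Icc 1 m,
    (la - mu) ^ 2 * exp (-(la - mu) * x i) / (la - mu * exp (-(la - mu) * x i)) ^ 2
  have hintegrand : ∀ t ∈ Ioi (x 1),
      (m.factorial * ∏ i ∈ Finset.Icc 1 m,
            (la - mu) ^ 2 * exp (-(la - mu) * x i) / (la - mu * exp (-(la - mu) * x i)) ^ 2 *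
              ((la - mu * exp (-(la - mu) * t)) / (1 - exp (-(la - mu) * t)))) *
        (↑(m + 1) * la ^ (m + 1) * (la - mu) ^ 2 * (1 - exp (-(la - mu) * t)) ^ m *
          exp (-(la - mu) * t) / (la - mu * exp (-(la - mu) * t)) ^ (m + 1 + 1))
      = m.factorial * P * (↑(m + 1) * la ^ (m + 1) * (la - mu) ^ 2) *
          (exp (-(la - mu) * t) / (la - mu * exp (-(la - mu) * t)) ^ 2) := fun t ht =>
    mul_prod_mul_div_pow_cancel (by simp) _
      (sub_pos.mpr (exp_neg_mul_lt_one hr (hx1.trans ht))).ne' (hden t (hx1.trans ht).le)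
  rw [setIntegral_congr_fun measurableSet_Ioi hintegrand, integral_const_mul,
    integral_Ioi_exp_neg_mul_div_sq hr hla fun t ht => hden t (hx1.le.trans ht)]
  have hD1 := hden (x 1) hx1.le
  generalize exp (-(la - mu) * x 1) = E1 at hD1 ⊢
  rw [Nat.factorial_succ]
  push_cast
  field_simp
  ring
end
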